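/- arXiv:math/0603447 — 3 statements merged into one kernel-verified Lean document; each statement's English description precedes it below -/
import Mathlib

section
/- Let (𝒳,𝒜) be a measurable space and π a probability measure on 𝒳×{−1,1} such that the regression function η is measurable. Then the Bayes rule f*(x) = sign(2η(x)−1) attains the optimal hinge risk: A(f*) = A* = inf over all measurable f:𝒳→ℝ of A(f). -/
open MeasureTheory
open scoped ENNReal NNReal

noncomputable section

namespace AggClass

variable {X : Type*} [MeasurableSpace X]

/-- The sign function, with the convention `sgn 0 = 1`. -/
def sgn (t : ℝ) : ℝ := if 0 ≤ t then 1 else -1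

/-- The Bayes rule `f*(x) = sign (2 η x - 1)`. -/
def bayes (η : X → ℝ) : X → ℝ := fun x => sgn (2 * η x - 1)

/-- The hinge risk `A(f) = E[max (1 - Y f(X)) 0]`, as an extended nonnegative real. -/
def hingeRiskE (π : Measure (X × ℝ)) (f : X → ℝ) : ℝ≥0∞ :=
  ∫⁻ p, ENNReal.ofReal (max (1 - p.2 * f p.1) 0) ∂π

/-- The optimal hinge risk `A* = inf {A(f) : f : X → ℝ measurable}`. -/
def optHingeRiskE (π : Measure (X × ℝ)) : ℝ≥0∞ :=
  ⨅ (f : X → ℝ) (_ : Measurable f), hingeRiskE π f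

/-- The hinge risk, real-valued. -/
def hingeRisk (π : Measure (X × ℝ)) (f : X → ℝ) : ℝ := (hingeRiskE π f).toReal

/-- The optimal hinge risk, real-valued. -/
def optHingeRisk (π : Measure (X × ℝ)) : ℝ := (optHingeRiskE π).toReal

/-- The misclassification risk `R(f) = π (Y ≠ sign (f X))`, ℝ≥0∞-valued. -/
def misRiskE (π : Measure (X × ℝ)) (f : X → ℝ) : ℝ≥0∞ :=
  π {p : X × ℝ | p.2 ≠ sgn (f p.1)}

/-- The misclassification risk, real-valued. -/
def misRisk (π : Measure (X × ℝ)) (f : X → ℝ) : ℝ := (misRiskE π f).toReal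

/-- `π` is a joint law of a pair (X,Y) on `X × {-1,1}` with regression function
`η x = π(Y = 1 ∣ X = x)`. -/
structure IsClassif (π : Measure (X × ℝ)) (η : X → ℝ) : Prop where
  labels : π {p : X × ℝ | p.2 = 1 ∨ p.2 = -1}ᶜ = 0
  meas : Measurable η
  mem01 : ∀ x, η x ∈ Set.Icc (0 : ℝ) 1
  cond : ∀ B : Set X, MeasurableSet B →
    π (B ×ˢ ({1} : Set ℝ)) = ∫⁻ x in B, ENNReal.ofReal (η x) ∂(π.map Prod.fst)

/-- Margin assumption MA(κ) with constant c₀ : for every measurable prediction rule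
`f : X → {-1,1}`, `E[|f(X) - f*(X)|] ≤ c₀ (R(f) - R*)^(1/κ)`. -/
def MA (π : Measure (X × ℝ)) (η : X → ℝ) (κ c₀ : ℝ) : Prop :=
  ∀ f : X → ℝ, Measurable f → (∀ x, f x = 1 ∨ f x = -1) →
    ∫ x, |f x - bayes η x| ∂(π.map Prod.fst)
      ≤ c₀ * (misRisk π f - misRisk π (bayes η)) ^ (1 / κ)

/-- Margin assumption for the hinge risk MAH(κ) with constant c : for every measurable
`f : X → [-1,1]`, `E[|f(X) - f*(X)|] ≤ c (A(f) - A*)^(1/κ)`. -/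
def MAH (π : Measure (X × ℝ)) (η : X → ℝ) (κ c : ℝ) : Prop :=
  ∀ f : X → ℝ, Measurable f → (∀ x, f x ∈ Set.Icc (-1 : ℝ) 1) →
    ∫ x, |f x - bayes η x| ∂(π.map Prod.fst)
      ≤ c * (hingeRisk π f - optHingeRisk π) ^ (1 / κ)

/-- Convex combination of f₁,…,f_M with weights w. -/
def convComb {M : ℕ} (f : Fin M → X → ℝ) (w : Fin M → ℝ) : X → ℝ :=
  fun x => ∑ j, w j * f j x

/-- The set of hinge risks of the elements of the convex hull of f₁,…,f_M. -/
def convRiskSet (π : Measure (X × ℝ)) {M : ℕ} (f : Fin M → X → ℝ) : Set ℝ :=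
  {a | ∃ w : Fin M → ℝ, (∀ j, 0 ≤ w j) ∧ (∑ j, w j) = 1 ∧ a = hingeRisk π (convComb f w)}

/-- The law of an i.i.d. sample of size n from π. -/
def sample {α : Type*} [MeasurableSpace α] (π : Measure α) [SigmaFinite π] (n : ℕ) :
    Measure (Fin n → α) :=
  Measure.pi fun _ => π

/-- The empirical hinge risk on the sample D. -/
def empHinge {n : ℕ} (D : Fin n → X × ℝ) (f : X → ℝ) : ℝ :=
  (n : ℝ)⁻¹ * ∑ i, max (1 - (D i).2 * f (D i).1) 0

/-- The empirical misclassification risk on the sample D. -/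
def empMis {n : ℕ} (D : Fin n → X × ℝ) (f : X → ℝ) : ℝ :=
  (n : ℝ)⁻¹ * ∑ i, if (D i).2 ≠ f (D i).1 then (1 : ℝ) else 0

/-- The set of indices minimizing the empirical hinge risk. -/
def ermSet {n M : ℕ} (f : Fin M → X → ℝ) (D : Fin n → X × ℝ) : Finset (Fin M) :=
  Finset.univ.filter fun j => ∀ k, empHinge D (f j) ≤ empHinge D (f k)

/-- `tf` is an empirical risk minimization (ERM) aggregate for the hinge loss. -/
def IsERM {n M : ℕ} (f : Fin M → X → ℝ) (tf : (Fin n → X × ℝ) → X → ℝ) : Prop :=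
  ∀ D, ∃ j ∈ ermSet f D, tf D = f j

/-- `tf` is the averaged ERM (AERM) aggregate for the hinge loss. -/
def IsAERM {n M : ℕ} (f : Fin M → X → ℝ) (tf : (Fin n → X × ℝ) → X → ℝ) : Prop :=
  ∀ D, tf D = fun x => ((ermSet f D).card : ℝ)⁻¹ * ∑ j ∈ ermSet f D, f j x

/-- The exponential weights for the hinge loss. -/
def aewWeight {n M : ℕ} (f : Fin M → X → ℝ) (D : Fin n → X × ℝ) (j : Fin M) : ℝ :=
  Real.exp (-(n : ℝ) * empHinge D (f j)) / ∑ k, Real.exp (-(n : ℝ) * empHinge D (f k))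

/-- `tf` is the aggregation-with-exponential-weights (AEW) aggregate for the hinge loss. -/
def IsAEW {n M : ℕ} (f : Fin M → X → ℝ) (tf : (Fin n → X × ℝ) → X → ℝ) : Prop :=
  ∀ D, tf D = fun x => ∑ j, aewWeight f D j * f j x

/-- Empirical hinge risk on the first k observations of the sample D. -/
def empHingeK {n : ℕ} (D : Fin n → X × ℝ) (k : ℕ) (f : X → ℝ) : ℝ :=
  (k : ℝ)⁻¹ * ∑ i ∈ Finset.univ.filter (fun i : Fin n => (i : ℕ) < k),
    max (1 - (D i).2 * f (D i).1) 0

/-- The cumulative exponential weights for the hinge loss. -/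
def caewWeight {n M : ℕ} (f : Fin M → X → ℝ) (D : Fin n → X × ℝ) (j : Fin M) : ℝ :=
  (n : ℝ)⁻¹ * ∑ k ∈ Finset.Icc 1 n,
    Real.exp (-(k : ℝ) * empHingeK D k (f j)) /
      ∑ l, Real.exp (-(k : ℝ) * empHingeK D k (f l))

/-!
Given `X = x`, the label is `1` with probability `a = η x`, so the hinge risk of `f` is the
integral over the `X`-marginal of the conditional risk `a (1 - t)₊ + (1 - a) (1 + t)₊` at
`t = f x`. For each `a ∈ [0, 1]` this is minimised by `t = sgn (2a - 1)`, so the Bayes rule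
beats every measurable `f` pointwise, hence in risk.
-/

lemma measurable_sgn : Measurable sgn :=
  Measurable.ite (measurableSet_le measurable_const measurable_id) measurable_const
    measurable_const

lemma measurable_bayes {η : X → ℝ} (hη : Measurable η) : Measurable (bayes η) :=
  measurable_sgn.comp (by fun_prop)

def condHingeRisk (a t : ℝ) : ℝ := a * max (1 - t) 0 + (1 - a) * max (1 + t) 0

/-- On `[-1, 1]` the conditional hinge risk is the affine function `1 - (2a - 1) t`, which is
minimal at the endpoint `sgn (2a - 1)`; outside `[-1, 1]` it only grows. -/
lemma condHingeRisk_sgn_le {a : ℝ} (h0 : 0 ≤ a) (h1 : a ≤ 1) (t : ℝ) :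
    condHingeRisk a (sgn (2 * a - 1)) ≤ condHingeRisk a t := by
  have := le_max_left (1 - t) 0
  have := le_max_right (1 - t) 0
  have := le_max_left (1 + t) 0
  have := le_max_right (1 + t) 0
  unfold condHingeRisk sgn
  split_ifs <;> norm_num <;> nlinarith

/-- The joint law of `(X, Y)` on the event `Y = y`, pushed forward to `X`. -/
def labelMarginal (π : Measure (X × ℝ)) (y : ℝ) : Measure X :=
  (π.restrict (Prod.snd ⁻¹' {y})).map Prod.fst

lemma labelMarginal_apply (π : Measure (X × ℝ)) (y : ℝ) {B : Set X} (hB : MeasurableSet B) :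
    labelMarginal π y B = π (B ×ˢ {y}) := by
  rw [labelMarginal, Measure.map_apply measurable_fst hB,
    Measure.restrict_apply (measurable_fst hB), Set.prod_eq]

lemma setLIntegral_snd_eq_lintegral_labelMarginal (π : Measure (X × ℝ)) (y : ℝ)
    {g : X × ℝ → ℝ≥0∞} (hg : Measurable fun x => g (x, y)) :
    ∫⁻ p in Prod.snd ⁻¹' {y}, g p ∂π = ∫⁻ x, g (x, y) ∂labelMarginal π y := by
  rw [labelMarginal, lintegral_map hg measurable_fst]
  refine setLIntegral_congr_fun (measurable_snd (measurableSet_singleton y)) fun p hp => ?_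
  rw [Set.mem_preimage, Set.mem_singleton_iff] at hp
  rw [← hp]

lemma restrict_snd_add_restrict_snd {π : Measure (X × ℝ)}
    (hlabels : π {p : X × ℝ | p.2 = 1 ∨ p.2 = -1}ᶜ = 0) :
    π.restrict (Prod.snd ⁻¹' {1}) + π.restrict (Prod.snd ⁻¹' {-1}) = π := by
  have hdisj : Disjoint (Prod.snd ⁻¹' {(1 : ℝ)} : Set (X × ℝ)) (Prod.snd ⁻¹' {-1}) :=
    (Set.disjoint_singleton.2 (by norm_num)).preimage _
  rw [← Measure.restrict_union hdisj (measurable_snd (measurableSet_singleton _))]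
  exact Measure.restrict_eq_self_of_ae_mem <|
    (measure_eq_zero_iff_ae_notMem.1 hlabels).mono fun _ hp => by simpa [or_iff_not_imp_left] using hp

lemma labelMarginal_add_labelMarginal {π : Measure (X × ℝ)}
    (hlabels : π {p : X × ℝ | p.2 = 1 ∨ p.2 = -1}ᶜ = 0) :
    labelMarginal π 1 + labelMarginal π (-1) = π.map Prod.fst := by
  rw [labelMarginal, labelMarginal, ← Measure.map_add _ _ measurable_fst,
    restrict_snd_add_restrict_snd hlabels]

namespace IsClassif

variable {π : Measure (X × ℝ)} {η : X → ℝ}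

lemma labelMarginal_one (hπ : IsClassif π η) :
    labelMarginal π 1 = (π.map Prod.fst).withDensity fun x => ENNReal.ofReal (η x) := by
  ext B hB
  rw [labelMarginal_apply π 1 hB, withDensity_apply _ hB, hπ.cond B hB]

/-- The two label marginals add up to the `X`-marginal, so the second one is read off from the
first by cancelling a finite measure. -/
lemma labelMarginal_neg_one [IsFiniteMeasure π] (hπ : IsClassif π η) :
    labelMarginal π (-1) = (π.map Prod.fst).withDensity fun x => ENNReal.ofReal (1 - η x) := by
  set μ := π.map Prod.fst
  have hη : Measurable fun x => ENNReal.ofReal (η x) := hπ.meas.ennreal_ofReal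
  have hdensity : (fun x => ENNReal.ofReal (η x)) + (fun x => ENNReal.ofReal (1 - η x)) = 1 := by
    ext x
    have := hπ.mem01 x
    rw [Pi.add_apply, ← ENNReal.ofReal_add this.1 (by linarith [this.2])]
    simp
  have hsplit : labelMarginal π 1 + labelMarginal π (-1) =
      labelMarginal π 1 + μ.withDensity fun x => ENNReal.ofReal (1 - η x) := by
    rw [labelMarginal_add_labelMarginal hπ.labels, hπ.labelMarginal_one,
      ← withDensity_add_left hη, hdensity, withDensity_one]
  ext B hB
  have hfin : labelMarginal π 1 B ≠ ⊤ := by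
    rw [labelMarginal_apply π 1 hB]
    exact measure_ne_top π _
  simpa only [Measure.add_apply, ENNReal.add_right_inj hfin] using
    congrArg (fun ν : Measure X => ν B) hsplit

lemma hingeRiskE_eq_lintegral_condHingeRisk [IsFiniteMeasure π] (hπ : IsClassif π η)
    {f : X → ℝ} (hf : Measurable f) :
    hingeRiskE π f = ∫⁻ x, ENNReal.ofReal (condHingeRisk (η x) (f x)) ∂π.map Prod.fst := by
  have hη := hπ.meas
  have hpos : Measurable fun x => ENNReal.ofReal (max (1 - f x) 0) := by fun_prop
  have hneg : Measurable fun x => ENNReal.ofReal (max (1 + f x) 0) := by fun_prop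
  calc hingeRiskE π f
      = ∫⁻ x, ENNReal.ofReal (max (1 - f x) 0) ∂labelMarginal π 1
        + ∫⁻ x, ENNReal.ofReal (max (1 + f x) 0) ∂labelMarginal π (-1) := by
        nth_rw 1 [hingeRiskE, ← restrict_snd_add_restrict_snd hπ.labels]
        rw [lintegral_add_measure,
          setLIntegral_snd_eq_lintegral_labelMarginal _ _ (by simpa using hpos),
          setLIntegral_snd_eq_lintegral_labelMarginal _ _ (by simpa using hneg)]
        simp only [one_mul, neg_one_mul, sub_neg_eq_add]
    _ = ∫⁻ x, ENNReal.ofReal (η x) * ENNReal.ofReal (max (1 - f x) 0)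
          + ENNReal.ofReal (1 - η x) * ENNReal.ofReal (max (1 + f x) 0) ∂π.map Prod.fst := by
        rw [hπ.labelMarginal_one, hπ.labelMarginal_neg_one,
          lintegral_withDensity_eq_lintegral_mul _ (by fun_prop) hpos,
          lintegral_withDensity_eq_lintegral_mul _ (by fun_prop) hneg,
          ← lintegral_add_left (by fun_prop)]
        rfl
    _ = _ := by
        refine lintegral_congr fun x => ?_
        obtain ⟨h0, h1⟩ := hπ.mem01 x
        rw [condHingeRisk, ← ENNReal.ofReal_mul h0, ← ENNReal.ofReal_mul (by linarith),
          ENNReal.ofReal_add (by positivity) (mul_nonneg (by linarith) (by positivity))]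

end IsClassif

/-- The Bayes rule attains the optimal hinge risk: A(f*) = A*. -/
theorem bayes_rule_attains_optimal_hinge_risk
    (π : Measure (X × ℝ)) [IsProbabilityMeasure π] (η : X → ℝ)
    (hπ : IsClassif π η) :
    hingeRiskE π (bayes η) = optHingeRiskE π := by
  refine le_antisymm (le_iInf₂ fun f hf => ?_) (iInf₂_le _ (measurable_bayes hπ.meas))
  rw [hπ.hingeRiskE_eq_lintegral_condHingeRisk (measurable_bayes hπ.meas),
    hπ.hingeRiskE_eq_lintegral_condHingeRisk hf]
  exact lintegral_mono fun x =>
    ENNReal.ofReal_le_ofReal (condHingeRisk_sgn_le (hπ.mem01 x).1 (hπ.mem01 x).2 (f x))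

end AggClass
end
end

section
/- For any probability measure π on 𝒳×{−1,1} and any measurable prediction rule f:𝒳→{−1,1}, the excess hinge risk equals twice the excess Bayes risk: A(f) − A* = 2(R(f) − R*). -/
open MeasureTheory
open scoped ENNReal NNReal

noncomputable section

namespace AggClass

variable {X : Type*} [MeasurableSpace X]

lemma sgn_eq_one_or_eq_neg_one (t : ℝ) : sgn t = 1 ∨ sgn t = -1 := by
  unfold sgn; split_ifs <;> simp

/-- `E[(1 - Y t)₊]` for a label `Y = ±1` with `P(Y = 1) = a`. -/
def condHinge (a t : ℝ) : ℝ := a * max (1 - t) 0 + (1 - a) * max (1 + t) 0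

lemma condHinge_sgn_le {a : ℝ} (ha₀ : 0 ≤ a) (ha₁ : a ≤ 1) (t : ℝ) :
    condHinge a (sgn (2 * a - 1)) ≤ condHinge a t := by
  have hpos := le_max_left (1 - t) 0
  have hneg := le_max_left (1 + t) 0
  -- the lighter of the two weights, times `(1 - t)₊ + (1 + t)₊ ≥ 2`, is a lower bound
  unfold condHinge sgn
  split_ifs with h <;> norm_num
  · nlinarith [mul_nonneg (by linarith : 0 ≤ 2 * a - 1) (le_max_right (1 - t) 0)]
  · nlinarith [mul_nonneg (by linarith : 0 ≤ 1 - 2 * a) (le_max_right (1 + t) 0)]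

lemma lintegral_restrict_snd_eq {β : Type*} [MeasurableSpace β] [MeasurableSingletonClass β]
    (μ : Measure (X × β)) (y : β) {G : X × β → ℝ≥0∞} (hG : Measurable G) :
    ∫⁻ p in {p | p.2 = y}, G p ∂μ = ∫⁻ x, G (x, y) ∂((μ.restrict {p | p.2 = y}).map Prod.fst) := by
  have hGy : Measurable fun x => G (x, y) := by fun_prop
  rw [lintegral_map hGy measurable_fst]
  refine setLIntegral_congr_fun (measurable_snd (measurableSet_singleton y)) fun p hp => ?_
  rw [← hp]

namespace IsClassif

variable {π : Measure (X × ℝ)} {η : X → ℝ}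

lemma ae_label (hπ : IsClassif π η) : ∀ᵐ p ∂π, p.2 = 1 ∨ p.2 = -1 :=
  measure_eq_zero_iff_ae_notMem.1 hπ.labels |>.mono fun _ hp => not_not.1 hp

lemma restrict_compl_label_one (hπ : IsClassif π η) :
    π.restrict {p | p.2 = 1}ᶜ = π.restrict {p | p.2 = -1} := by
  refine Measure.restrict_congr_set ?_
  filter_upwards [hπ.ae_label] with p hp
  change (p ∈ {p : X × ℝ | p.2 = 1}ᶜ) = (p ∈ {p : X × ℝ | p.2 = -1})
  rcases hp with h | h <;> norm_num [h]

lemma map_restrict_label_one (hπ : IsClassif π η) :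
    (π.restrict {p | p.2 = 1}).map Prod.fst
      = (π.map Prod.fst).withDensity fun x => ENNReal.ofReal (η x) := by
  ext B hB
  rw [Measure.map_apply measurable_fst hB, Measure.restrict_apply (hB.preimage measurable_fst),
    withDensity_apply _ hB, ← hπ.cond B hB]
  rfl

lemma map_restrict_label_neg_one [IsFiniteMeasure π] (hπ : IsClassif π η) :
    (π.restrict {p | p.2 = -1}).map Prod.fst
      = (π.map Prod.fst).withDensity fun x => ENNReal.ofReal (1 - η x) := by
  have hS : MeasurableSet {p : X × ℝ | p.2 = 1} := measurable_snd (measurableSet_singleton 1)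
  have hsplit : π.map Prod.fst = (π.restrict {p | p.2 = 1}).map Prod.fst
      + (π.restrict {p | p.2 = -1}).map Prod.fst := by
    rw [← hπ.restrict_compl_label_one, ← Measure.map_add _ _ measurable_fst,
      Measure.restrict_add_restrict_compl hS]
  have hdensity : π.map Prod.fst = (π.restrict {p | p.2 = 1}).map Prod.fst
      + (π.map Prod.fst).withDensity fun x => ENNReal.ofReal (1 - η x) := by
    rw [hπ.map_restrict_label_one, ← withDensity_add_left hπ.meas.ennreal_ofReal]
    conv_lhs => rw [← withDensity_one (μ := π.map Prod.fst)]
    congr 1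
    funext x
    obtain ⟨h₀, h₁⟩ := hπ.mem01 x
    simp only [Pi.add_apply, Pi.one_apply]
    rw [← ENNReal.ofReal_add h₀ (sub_nonneg.2 h₁), add_sub_cancel, ENNReal.ofReal_one]
  -- both decompose `π.map Prod.fst`; cancel the common (finite) first summand
  ext B hB
  have hB_eq := congrArg (· B) (hsplit.symm.trans hdensity)
  simp only [Measure.coe_add, Pi.add_apply] at hB_eq
  exact (ENNReal.add_right_inj (measure_ne_top _ _)).1 hB_eq

lemma lintegral_eq_lintegral_map_fst [IsFiniteMeasure π] (hπ : IsClassif π η) {G : X × ℝ → ℝ≥0∞}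
    (hG : Measurable G) :
    ∫⁻ p, G p ∂π = ∫⁻ x, ENNReal.ofReal (η x) * G (x, 1)
      + ENNReal.ofReal (1 - η x) * G (x, -1) ∂(π.map Prod.fst) := by
  have hG₁ : Measurable fun x => G (x, 1) := by fun_prop
  have hG₂ : Measurable fun x => G (x, -1) := by fun_prop
  have hS : MeasurableSet {p : X × ℝ | p.2 = 1} := measurable_snd (measurableSet_singleton 1)
  rw [← lintegral_add_compl G hS,
    hπ.restrict_compl_label_one, lintegral_restrict_snd_eq π 1 hG,
    lintegral_restrict_snd_eq π (-1) hG, hπ.map_restrict_label_one,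
    hπ.map_restrict_label_neg_one,
    lintegral_withDensity_eq_lintegral_mul _ hπ.meas.ennreal_ofReal hG₁,
    lintegral_withDensity_eq_lintegral_mul _ (hπ.meas.const_sub 1).ennreal_ofReal hG₂,
    ← lintegral_add_left (hπ.meas.ennreal_ofReal.mul hG₁)]
  rfl

lemma hingeRiskE_eq [IsFiniteMeasure π] (hπ : IsClassif π η) {g : X → ℝ} (hg : Measurable g) :
    hingeRiskE π g = ∫⁻ x, ENNReal.ofReal (condHinge (η x) (g x)) ∂(π.map Prod.fst) := by
  rw [hingeRiskE, hπ.lintegral_eq_lintegral_map_fst (by fun_prop)]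
  refine lintegral_congr fun x => ?_
  obtain ⟨h₀, h₁⟩ := hπ.mem01 x
  rw [condHinge, ENNReal.ofReal_add (by positivity) (mul_nonneg (sub_nonneg.2 h₁) (by positivity)),
    ENNReal.ofReal_mul h₀, ENNReal.ofReal_mul (sub_nonneg.2 h₁)]
  norm_num

lemma optHingeRiskE_eq_hingeRiskE_bayes [IsFiniteMeasure π] (hπ : IsClassif π η) :
    optHingeRiskE π = hingeRiskE π (bayes η) := by
  have hbayes := measurable_bayes hπ.meas
  refine le_antisymm (iInf₂_le _ hbayes) (le_iInf₂ fun g hg => ?_)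
  rw [hπ.hingeRiskE_eq hbayes, hπ.hingeRiskE_eq hg]
  exact lintegral_mono fun x =>
    ENNReal.ofReal_le_ofReal (condHinge_sgn_le (hπ.mem01 x).1 (hπ.mem01 x).2 (g x))

end IsClassif

lemma hingeRiskE_eq_two_mul_misRiskE {π : Measure (X × ℝ)}
    (hlabel : ∀ᵐ p ∂π, p.2 = 1 ∨ p.2 = -1) {g : X → ℝ} (hg : Measurable g)
    (hval : ∀ x, g x = 1 ∨ g x = -1) :
    hingeRiskE π g = 2 * misRiskE π g := by
  have hmeas : MeasurableSet {p : X × ℝ | p.2 ≠ sgn (g p.1)} :=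
    (measurableSet_eq_fun measurable_snd ((measurable_sgn.comp hg).comp measurable_fst)).compl
  rw [hingeRiskE, misRiskE, ← lintegral_indicator_const hmeas]
  refine lintegral_congr_ae ?_
  filter_upwards [hlabel] with p hp
  rcases hp with hy | hy <;> rcases hval p.1 with hs | hs <;>
    norm_num [Set.indicator_apply, hy, hs, sgn]

/-- for a prediction rule f : X → {-1,1}, A(f) - A* = 2 (R(f) - R*). -/
theorem excess_hinge_eq_twice_excess_bayes
    (π : Measure (X × ℝ)) [IsProbabilityMeasure π] (η : X → ℝ)
    (hπ : IsClassif π η) (f : X → ℝ) (hf : Measurable f)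
    (hval : ∀ x, f x = 1 ∨ f x = -1) :
    hingeRisk π f - optHingeRisk π = 2 * (misRisk π f - misRisk π (bayes η)) := by
  have hbayes : hingeRiskE π (bayes η) = 2 * misRiskE π (bayes η) :=
    hingeRiskE_eq_two_mul_misRiskE hπ.ae_label (measurable_bayes hπ.meas)
      fun x => sgn_eq_one_or_eq_neg_one _
  rw [hingeRisk, optHingeRisk, misRisk, misRisk, hπ.optHingeRiskE_eq_hingeRiskE_bayes, hbayes,
    hingeRiskE_eq_two_mul_misRiskE hπ.ae_label hf hval, ENNReal.toReal_mul, ENNReal.toReal_mul]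
  norm_num
  ring

end AggClass
end
end

section
/- Let φ:ℝ→ℝ be a convex function, let (x₁,y₁),…,(x_n,y_n) ∈ 𝒳×{−1,1}, and for f:𝒳→ℝ set A_n(f) = (1/n)∑_{i=1}^n φ(y_i f(x_i)). Let f₁,…,f_M:𝒳→ℝ (M ≥ 2). Define the exponential-weights aggregate f̃ = ∑_{j=1}^M w_j f_j with w_j = exp(−nA_n(f_j))/∑_{k=1}^M exp(−nA_n(f_k)), and the averaged-ERM aggregate f̄ = (1/N)∑_{j∈J} f_j where J = {j : A_n(f_j) = min_k A_n(f_k)} and N = |J|. Then A_n(f̃) ≤ min_{1≤j≤M} A_n(f_j) + (log M)/n and A_n(f̄) ≤ min_{1≤j≤M} A_n(f_j). -/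
open MeasureTheory
open scoped ENNReal NNReal

noncomputable section

namespace AggClass

variable {X : Type*} [MeasurableSpace X]

private lemma jensen_aux {Y : Type*} (φ : ℝ → ℝ) (hφ : ConvexOn ℝ Set.univ φ)
    {n M : ℕ} (xy : Fin n → Y × ℝ) (f : Fin M → Y → ℝ) (w : Fin M → ℝ)
    (hw0 : ∀ j, 0 ≤ w j) (hw1 : ∑ j, w j = 1) :
    (n : ℝ)⁻¹ * ∑ i, φ ((xy i).2 * ∑ j, w j * f j (xy i).1)
      ≤ ∑ j, w j * ((n : ℝ)⁻¹ * ∑ i, φ ((xy i).2 * f j (xy i).1)) := by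
  have h1 : ∀ i, φ ((xy i).2 * ∑ j, w j * f j (xy i).1)
      ≤ ∑ j, w j * φ ((xy i).2 * f j (xy i).1) := by
    intro i
    have e : (xy i).2 * ∑ j, w j * f j (xy i).1
        = ∑ j : Fin M, w j • ((xy i).2 * f j (xy i).1) := by
      rw [Finset.mul_sum]
      exact Finset.sum_congr rfl fun j _ => by simp [smul_eq_mul]; ring
    have := hφ.map_sum_le (t := Finset.univ) (w := w)
      (p := fun j => (xy i).2 * f j (xy i).1)
      (fun j _ => hw0 j) hw1 (fun j _ => Set.mem_univ _)
    rw [e]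
    simpa [smul_eq_mul] using this
  have h2 : (n : ℝ)⁻¹ * ∑ i, φ ((xy i).2 * ∑ j, w j * f j (xy i).1)
      ≤ (n : ℝ)⁻¹ * ∑ i, ∑ j, w j * φ ((xy i).2 * f j (xy i).1) := by
    apply mul_le_mul_of_nonneg_left (Finset.sum_le_sum fun i _ => h1 i)
    positivity
  refine h2.trans_eq ?_
  rw [Finset.sum_comm, Finset.mul_sum]
  refine Finset.sum_congr rfl fun j _ => ?_
  simp only [Finset.mul_sum]
  refine Finset.sum_congr rfl fun i _ => ?_
  ring

private lemma entropy_aux {M : ℕ} (hM : 0 < M) (w : Fin M → ℝ)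
    (hw : ∀ j, 0 < w j) (h1 : ∑ j, w j = 1) :
    ∑ j, -(w j * Real.log (w j)) ≤ Real.log M := by
  have key : ∀ j : Fin M, -(w j * Real.log (w j))
      ≤ w j * Real.log M + ((M : ℝ)⁻¹ - w j) := by
    intro j
    have hMpos : (0 : ℝ) < M := by exact_mod_cast hM
    have hpos : (0 : ℝ) < ((M : ℝ) * w j)⁻¹ := inv_pos.2 (mul_pos hMpos (hw j))
    have hlog : Real.log (((M : ℝ) * w j)⁻¹) ≤ ((M : ℝ) * w j)⁻¹ - 1 :=
      Real.log_le_sub_one_of_pos hpos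
    have h2 : w j * Real.log (((M : ℝ) * w j)⁻¹) ≤ w j * (((M : ℝ) * w j)⁻¹ - 1) :=
      mul_le_mul_of_nonneg_left hlog (hw j).le
    have h3 : w j * (((M : ℝ) * w j)⁻¹ - 1) = (M : ℝ)⁻¹ - w j := by
      rw [mul_sub, mul_inv, mul_comm ((M : ℝ)⁻¹), ← mul_assoc,
        mul_inv_cancel₀ (hw j).ne', one_mul, mul_one]
    have h4 : Real.log (((M : ℝ) * w j)⁻¹) = -Real.log M - Real.log (w j) := by
      rw [Real.log_inv, Real.log_mul (ne_of_gt hMpos) (ne_of_gt (hw j))]; ring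
    nlinarith [h2, (hw j).le]
  calc ∑ j, -(w j * Real.log (w j))
      ≤ ∑ j, (w j * Real.log M + ((M : ℝ)⁻¹ - w j)) :=
        Finset.sum_le_sum fun j _ => key j
    _ = Real.log M := by
        rw [Finset.sum_add_distrib, Finset.sum_sub_distrib, ← Finset.sum_mul, h1]
        simp [Finset.sum_const, Finset.card_univ]
        rw [mul_inv_cancel₀ (by exact_mod_cast hM.ne' : (M : ℝ) ≠ 0)]
        ring

/-- the exponential-weights aggregate and the averaged-ERM aggregate have
empirical φ-risk within (log M)/n of (resp. not larger than) the best empirical risk. -/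
theorem empirical_risk_of_aggregates
    {Y : Type*} (φ : ℝ → ℝ) (hφ : ConvexOn ℝ Set.univ φ)
    (n : ℕ) (hn : 1 ≤ n) (xy : Fin n → Y × ℝ)
    (hxy : ∀ i, (xy i).2 = 1 ∨ (xy i).2 = -1)
    (M : ℕ) (hM : 2 ≤ M) (f : Fin M → Y → ℝ)
    (An : (Y → ℝ) → ℝ)
    (hAn : ∀ g : Y → ℝ, An g = (n : ℝ)⁻¹ * ∑ i, φ ((xy i).2 * g (xy i).1))
    (w : Fin M → ℝ)
    (hw : w = fun j =>
      Real.exp (-(n : ℝ) * An (f j)) / ∑ k, Real.exp (-(n : ℝ) * An (f k)))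
    (J : Finset (Fin M)) (hJ : J = Finset.univ.filter fun j => ∀ k, An (f j) ≤ An (f k)) :
    An (fun x => ∑ j, w j * f j x) ≤ (⨅ j, An (f j)) + Real.log M / n ∧
    An (fun x => (J.card : ℝ)⁻¹ * ∑ j ∈ J, f j x) ≤ ⨅ j, An (f j) := by
  have hMpos : (0 : ℝ) < M := by positivity
  have hnpos : (0 : ℝ) < n := by exact_mod_cast hn
  have hNE : Nonempty (Fin M) := ⟨⟨0, by omega⟩⟩
  obtain ⟨j0, hj0⟩ := Finite.exists_min fun j => An (f j)
  have hbdd : BddBelow (Set.range fun j => An (f j)) := Finite.bddBelow_range _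
  have hinf : (⨅ j, An (f j)) = An (f j0) :=
    le_antisymm (ciInf_le hbdd j0) (le_ciInf hj0)
  constructor
  · -- AEW part
    set S : ℝ := ∑ k, Real.exp (-(n : ℝ) * An (f k)) with hS
    have hSpos : 0 < S :=
      Finset.sum_pos (fun k _ => Real.exp_pos _) Finset.univ_nonempty
    have hwpos : ∀ j, 0 < w j := by
      intro j; rw [hw]; exact div_pos (Real.exp_pos _) hSpos
    have hw1 : ∑ j, w j = 1 := by
      rw [hw, ← Finset.sum_div, ← hS, div_self hSpos.ne']
    -- Jensen step
    have hjen : An (fun x => ∑ j, w j * f j x) ≤ ∑ j, w j * An (f j) := by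
      have := jensen_aux φ hφ xy f w (fun j => (hwpos j).le) hw1
      rw [hAn]
      refine this.trans_eq ?_
      exact Finset.sum_congr rfl fun j _ => by rw [hAn]
    refine hjen.trans ?_
    -- key identity: n * An (f j) = -log (w j) - log S
    have key : ∀ j, (n : ℝ) * An (f j) = -Real.log (w j) - Real.log S := by
      intro j
      rw [hw]
      simp only
      rw [Real.log_div (Real.exp_ne_zero _) hSpos.ne', Real.log_exp]
      ring
    have hsum : (n : ℝ) * ∑ j, w j * An (f j)
        = (∑ j, -(w j * Real.log (w j))) - Real.log S := by
      rw [Finset.mul_sum]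
      have : ∀ j : Fin M, (n : ℝ) * (w j * An (f j))
          = -(w j * Real.log (w j)) - w j * Real.log S := by
        intro j
        have := key j
        nlinarith [this, hwpos j]
      rw [Finset.sum_congr rfl fun j _ => this j, Finset.sum_sub_distrib,
        ← Finset.sum_mul, hw1, one_mul]
    have hent : ∑ j, -(w j * Real.log (w j)) ≤ Real.log M :=
      entropy_aux (by omega) w hwpos hw1
    have hSlb : Real.exp (-(n : ℝ) * An (f j0)) ≤ S :=
      Finset.single_le_sum (f := fun k => Real.exp (-(n : ℝ) * An (f k)))
        (fun k _ => (Real.exp_pos _).le) (Finset.mem_univ j0)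
    have hlogS : -(n : ℝ) * An (f j0) ≤ Real.log S := by
      have := Real.log_le_log (Real.exp_pos _) hSlb
      rwa [Real.log_exp] at this
    have hmain : (n : ℝ) * ∑ j, w j * An (f j)
        ≤ Real.log M + (n : ℝ) * An (f j0) := by
      rw [hsum]; nlinarith
    have hdiv : Real.log M / (n : ℝ) * (n : ℝ) = Real.log M :=
      div_mul_cancel₀ _ hnpos.ne'
    rw [hinf]
    nlinarith [hmain, hdiv]
  · -- AERM part
    have hj0J : j0 ∈ J := by
      rw [hJ]; exact Finset.mem_filter.2 ⟨Finset.mem_univ _, hj0⟩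
    have hJne : J.Nonempty := ⟨j0, hj0J⟩
    have hcard : (0 : ℝ) < (J.card : ℝ) := by
      exact_mod_cast Finset.card_pos.2 hJne
    set v : Fin M → ℝ := fun j => if j ∈ J then (J.card : ℝ)⁻¹ else 0 with hv
    have hv0 : ∀ j, 0 ≤ v j := by
      intro j; rw [hv]; dsimp only; split <;> positivity
    have hv1 : ∑ j, v j = 1 := by
      rw [hv]
      simp only [Finset.sum_ite_mem, Finset.univ_inter, Finset.sum_const,
        nsmul_eq_mul]
      exact mul_inv_cancel₀ hcard.ne'
    have hfun : ∀ x, (J.card : ℝ)⁻¹ * ∑ j ∈ J, f j x = ∑ j, v j * f j x := by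
      intro x
      rw [hv]
      simp only [ite_mul, zero_mul, Finset.sum_ite_mem, Finset.univ_inter]
      rw [Finset.mul_sum]
    have hjen : An (fun x => (J.card : ℝ)⁻¹ * ∑ j ∈ J, f j x)
        ≤ ∑ j, v j * An (f j) := by
      have := jensen_aux φ hφ xy f v hv0 hv1
      rw [hAn]
      simp only [hfun]
      refine this.trans_eq ?_
      exact Finset.sum_congr rfl fun j _ => by rw [hAn]
    refine hjen.trans ?_
    rw [hinf]
    have hle : ∀ j, v j * An (f j) ≤ v j * An (f j0) := by
      intro j
      rcases eq_or_ne (v j) 0 with h | h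
      · simp [h]
      · have hjJ : j ∈ J := by
          by_contra hc
          exact h (by rw [hv]; simp [hc])
        have : ∀ k, An (f j) ≤ An (f k) := by
          rw [hJ] at hjJ
          exact (Finset.mem_filter.1 hjJ).2
        exact mul_le_mul_of_nonneg_left (this j0) (hv0 j)
    calc ∑ j, v j * An (f j) ≤ ∑ j, v j * An (f j0) :=
          Finset.sum_le_sum fun j _ => hle j
      _ = An (f j0) := by rw [← Finset.sum_mul, hv1, one_mul]

end AggClass
end
end
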